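/- Let G and H be finite simple graphs, each on at least 4 vertices and each prime with respect to modular decomposition, and let G' (respectively H') be obtained from G (respectively H) by adding a new universal vertex adjacent to all other vertices. Then G is isomorphic to H if and only if G' and H' are Seidel complement equivalent. -/

import Mathlib

universe u

/-- The Seidel complement of `G` at `v`: adjacency between the open neighborhood of `v`
and the set of vertices different from `v` and not adjacent to `v` is complemented,
all other adjacencies are unchanged. -/
def seidelCompl {V : Type u} (G : SimpleGraph V) (v : V) : SimpleGraph V where
  Adj x y := x ≠ y ∧
    Xor' (G.Adj x y)
      ((G.Adj v x ∧ ¬ G.Adj v y ∧ y ≠ v) ∨ (G.Adj v y ∧ ¬ G.Adj v x ∧ x ≠ v))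
  symm := by
    constructor
    rintro x y ⟨hxy, h⟩
    refine ⟨hxy.symm, ?_⟩
    have h1 : G.Adj x y ↔ G.Adj y x := G.adj_comm x y
    unfold Xor' at h ⊢
    rw [xor_def] at h ⊢
    tauto
  loopless := ⟨fun x h => h.1 rfl⟩

/-- `M` is a module of `G`: every vertex outside `M` is adjacent either to all
vertices of `M` or to none of them. -/
def IsModule {V : Type u} (G : SimpleGraph V) (M : Set V) : Prop :=
  ∀ z ∉ M, (∀ m ∈ M, G.Adj z m) ∨ (∀ m ∈ M, ¬ G.Adj z m)

/-- `G` is prime w.r.t. modular decomposition: every module is trivial. -/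
def IsPrime {V : Type u} (G : SimpleGraph V) : Prop :=
  ∀ M : Set V, IsModule G M → M = ∅ ∨ (∃ x, M = {x}) ∨ M = Set.univ

/-- `G` and `H` are Seidel complement equivalent: some finite sequence of Seidel
complementations applied to `G` yields a graph isomorphic to `H`. -/
def SeidelEquiv {V W : Type u} (G : SimpleGraph V) (H : SimpleGraph W) : Prop :=
  ∃ l : List V, Nonempty ((l.foldl seidelCompl G) ≃g H)

/-- The graph obtained from `G` by adding a new universal vertex (`none`). -/
def addUniversal {V : Type u} (G : SimpleGraph V) : SimpleGraph (Option V) :=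
  SimpleGraph.fromRel fun x y =>
    x = none ∨ ∃ u w : V, x = some u ∧ y = some w ∧ G.Adj u w

/-!
Write `K * v` for `seidelCompl K v`. Away from `v`, complementing at `v` flips the adjacency of
`x, y` exactly when `v` sees exactly one of them; hence `K * v * v = K`, `K * c = K` for a
universal vertex `c`, and `K * u * b ≅ K * b` via the transposition of `u` and `b`. So every graph
Seidel equivalent to a graph `K` with a universal vertex is isomorphic to some `K * z`.

Let `G'` be `G` plus a universal vertex, `G` prime. For `u ∈ G`, `G' * u` has no universal
vertex: it would be `u` (universal in `G`), the added vertex (then `u` is universal in `G`), or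
some `w ≠ u` (then `{u, w}` is a module of `G`). Since `H'` has a universal vertex, a Seidel
equivalence between `G'` and `H'` is an isomorphism `G' ≅ H'`, which yields `G ≅ H`.
-/

open SimpleGraph

section SeidelCompl

variable {U : Type*} (K : SimpleGraph U)

lemma seidelCompl_adj (v x y : U) :
    (seidelCompl K v).Adj x y ↔ x ≠ y ∧ Xor (K.Adj x y)
      ((K.Adj v x ∧ ¬ K.Adj v y ∧ y ≠ v) ∨ (K.Adj v y ∧ ¬ K.Adj v x ∧ x ≠ v)) :=
  Iff.rfl

lemma seidelCompl_adj_left_self (v x : U) : (seidelCompl K v).Adj v x ↔ K.Adj v x := by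
  simp only [seidelCompl_adj, Xor, K.irrefl]
  grind [Adj.ne]

lemma seidelCompl_adj_right_self (v x : U) : (seidelCompl K v).Adj x v ↔ K.Adj x v := by
  rw [adj_comm, seidelCompl_adj_left_self, adj_comm]

lemma seidelCompl_adj_of_ne {v x y : U} (hxy : x ≠ y) (hx : x ≠ v) (hy : y ≠ v) :
    (seidelCompl K v).Adj x y ↔ (K.Adj x y ↔ (K.Adj v x ↔ K.Adj v y)) := by
  simp only [seidelCompl_adj, Xor]
  grind

lemma seidelCompl_seidelCompl_self (v : U) : seidelCompl (seidelCompl K v) v = K := by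
  ext x y
  rcases eq_or_ne x y with rfl | hxy
  · simp
  rcases eq_or_ne x v with rfl | hx
  · exact (seidelCompl_adj_left_self _ _ _).trans (seidelCompl_adj_left_self _ _ _)
  rcases eq_or_ne y v with rfl | hy
  · exact (seidelCompl_adj_right_self _ _ _).trans (seidelCompl_adj_right_self _ _ _)
  simp only [seidelCompl_adj_of_ne _ hxy hx hy, seidelCompl_adj_left_self]
  tauto

lemma seidelCompl_seidelCompl_adj_swap [DecidableEq U] {u b : U} (hub : u ≠ b) (x y : U) :
    (seidelCompl K b).Adj (Equiv.swap u b x) (Equiv.swap u b y) ↔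
      (seidelCompl (seidelCompl K u) b).Adj x y := by
  rcases eq_or_ne x y with rfl | hxy
  · simp
  have trichotomy : ∀ x, x = u ∨ x = b ∨ (x ≠ u ∧ x ≠ b) := by tauto
  rcases trichotomy x with rfl | rfl | ⟨hxu, hxb⟩ <;>
    rcases trichotomy y with rfl | rfl | ⟨hyu, hyb⟩ <;> clear trichotomy <;>
    grind [Equiv.swap_apply_left, Equiv.swap_apply_right, Equiv.swap_apply_of_ne_of_ne,
      seidelCompl_adj_left_self, seidelCompl_adj_right_self, seidelCompl_adj_of_ne, adj_comm]

lemma nonempty_iso_seidelCompl_seidelCompl {u b : U} (hub : u ≠ b) :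
    Nonempty (seidelCompl (seidelCompl K u) b ≃g seidelCompl K b) := by
  classical
  exact ⟨⟨Equiv.swap u b, seidelCompl_seidelCompl_adj_swap K hub _ _⟩⟩

variable {K}

lemma seidelCompl_of_isUniversal {c : U} (hc : K.IsUniversal c) : seidelCompl K c = K := by
  ext x y
  rcases eq_or_ne x y with rfl | hxy
  · simp
  rcases eq_or_ne x c with rfl | hx
  · exact seidelCompl_adj_left_self _ _ _
  rcases eq_or_ne y c with rfl | hy
  · exact seidelCompl_adj_right_self _ _ _
  simp [seidelCompl_adj_of_ne _ hxy hx hy, hc hx.symm, hc hy.symm]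

def seidelComplCongr {U' : Type*} {L : SimpleGraph U'} (e : K ≃g L) (v : U) :
    seidelCompl K v ≃g seidelCompl L (e v) where
  toEquiv := e.toEquiv
  map_rel_iff' {x y} := by
    simp only [seidelCompl_adj, RelIso.coe_fn_toEquiv, e.map_adj_iff, ne_eq,
      e.apply_eq_iff_eq]

end SeidelCompl

section SeidelClass

variable {U : Type*} {K : SimpleGraph U} {c : U}

lemma exists_iso_seidelCompl_seidelCompl (hc : K.IsUniversal c) (z w : U) :
    ∃ z', Nonempty (seidelCompl (seidelCompl K z) w ≃g seidelCompl K z') := by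
  rcases eq_or_ne z w with rfl | hzw
  · refine ⟨c, ⟨?_⟩⟩
    rw [seidelCompl_seidelCompl_self, seidelCompl_of_isUniversal hc]
  · exact ⟨w, nonempty_iso_seidelCompl_seidelCompl K hzw⟩

lemma exists_iso_foldl_seidelCompl (hc : K.IsUniversal c) (l : List U) :
    ∃ z, Nonempty (l.foldl seidelCompl K ≃g seidelCompl K z) := by
  induction l using List.reverseRecOn with
  | nil => exact ⟨c, by rw [seidelCompl_of_isUniversal hc]; exact ⟨.refl⟩⟩
  | append_singleton l v ih =>
    obtain ⟨z, ⟨e⟩⟩ := ih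
    obtain ⟨z', ⟨e'⟩⟩ := exists_iso_seidelCompl_seidelCompl hc z (e v)
    rw [List.foldl_concat]
    exact ⟨z', ⟨(seidelComplCongr e v).trans e'⟩⟩

end SeidelClass

namespace SimpleGraph

variable {U U' : Type*} {K : SimpleGraph U} {L : SimpleGraph U'}

lemma IsUniversal.map (e : K ≃g L) {c : U} (hc : K.IsUniversal c) : L.IsUniversal (e c) := by
  intro w hw
  rw [← e.apply_symm_apply w, e.map_adj_iff]
  exact hc fun h => hw (by rw [h, e.apply_symm_apply])

def Iso.swapOfIsUniversal [DecidableEq U] {a b : U} (ha : K.IsUniversal a)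
    (hb : K.IsUniversal b) : K ≃g K where
  toEquiv := Equiv.swap a b
  map_rel_iff' {x y} := by
    grind [IsUniversal, adj_comm, Adj.ne]

end SimpleGraph

section AddUniversal

variable {V W : Type*} (G : SimpleGraph V) {H : SimpleGraph W}

@[simp]
lemma addUniversal_adj_some_some (a b : V) :
    (addUniversal G).Adj (some a) (some b) ↔ G.Adj a b := by
  simp only [addUniversal, fromRel_adj]
  grind [adj_comm, Adj.ne]

@[simp]
lemma addUniversal_adj_none_some (a : V) : (addUniversal G).Adj none (some a) := by
  simp [addUniversal]

@[simp]
lemma addUniversal_adj_some_none (a : V) : (addUniversal G).Adj (some a) none :=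
  (addUniversal_adj_none_some G a).symm

lemma isUniversal_addUniversal_none : (addUniversal G).IsUniversal none := by
  rintro (_ | a) h
  · exact absurd rfl h
  · exact addUniversal_adj_none_some G a

variable {G}

def addUniversalCongr (f : G ≃g H) : addUniversal G ≃g addUniversal H where
  toEquiv := Equiv.optionCongr f.toEquiv
  map_rel_iff' {x y} := by
    rcases x with _ | a <;> rcases y with _ | b <;> simp [f.map_adj_iff]

/-- `f` need not fix the added vertex; composing it with the transposition of the two universal
vertices `f none` and `none` of `addUniversal H` makes it do so. -/
noncomputable def isoOfAddUniversal (f : addUniversal G ≃g addUniversal H) : G ≃g H :=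
  letI := Classical.decEq (Option W)
  let g : addUniversal G ≃g addUniversal H := f.trans <|
    Iso.swapOfIsUniversal ((isUniversal_addUniversal_none G).map f)
      (isUniversal_addUniversal_none H)
  have hg : g none = none := Equiv.swap_apply_left _ _
  have some_removeNone (a : V) : some (g.toEquiv.removeNone a) = g (some a) :=
    Equiv.removeNone_some _ <| Option.ne_none_iff_exists'.1 fun h =>
      Option.some_ne_none a (g.injective (h.trans hg.symm))
  { toEquiv := g.toEquiv.removeNone
    map_rel_iff' {a b} := by
      rw [← addUniversal_adj_some_some, some_removeNone, some_removeNone,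
        g.map_adj_iff, addUniversal_adj_some_some] }

end AddUniversal

section Prime

variable {V : Type*} {G : SimpleGraph V}

lemma exists_ne_ne_of_three_le_card [Fintype V] (hV : 3 ≤ Fintype.card V) (u w : V) :
    ∃ t, t ≠ u ∧ t ≠ w := by
  classical
  have hcard : ({u, w} : Finset V).card < (Finset.univ : Finset V).card :=
    Finset.card_le_two.trans_lt (by rw [Finset.card_univ]; omega)
  obtain ⟨t, -, ht⟩ := Finset.exists_mem_notMem_of_card_lt_card hcard
  exact ⟨t, by simpa [not_or] using ht⟩

lemma isModule_pair {u w : V} (h : ∀ t, t ≠ u → t ≠ w → (G.Adj u t ↔ G.Adj w t)) :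
    IsModule G {u, w} := by
  intro z hz
  simp only [Set.mem_insert_iff, Set.mem_singleton_iff, not_or] at hz
  simp only [Set.mem_insert_iff, Set.mem_singleton_iff, forall_eq_or_imp, forall_eq,
    G.adj_comm z, h z hz.1 hz.2]
  tauto

lemma IsPrime.not_isModule (hG : IsPrime G) {M : Set V} {a b c : V} (ha : a ∈ M) (hb : b ∈ M)
    (hab : a ≠ b) (hc : c ∉ M) : ¬ IsModule G M := by
  intro hM
  rcases hG M hM with rfl | ⟨x, rfl⟩ | rfl
  · exact ha
  · exact hab (ha.trans hb.symm)
  · exact hc trivial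

variable [Fintype V]

lemma IsPrime.not_isUniversal (hG : IsPrime G) (hV : 3 ≤ Fintype.card V) (u : V) :
    ¬ G.IsUniversal u := by
  intro hu
  obtain ⟨w, hwu⟩ := Fintype.exists_ne_of_one_lt_card (by omega) u
  obtain ⟨t, htu, htw⟩ := exists_ne_ne_of_three_le_card hV u w
  refine hG.not_isModule (M := {u}ᶜ) hwu htu htw.symm (not_not.2 rfl) fun z hz => ?_
  rw [Set.notMem_compl_iff, Set.mem_singleton_iff] at hz
  exact Or.inl fun m hm => hz ▸ hu (Ne.symm hm)

lemma IsPrime.not_isUniversal_seidelCompl_addUniversal (hG : IsPrime G)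
    (hV : 3 ≤ Fintype.card V) (u : V) (x : Option V) :
    ¬ (seidelCompl (addUniversal G) (some u)).IsUniversal x := by
  intro hx
  have adj_none (t : V) (ht : t ≠ u) :
      (seidelCompl (addUniversal G) (some u)).Adj none (some t) ↔ G.Adj u t := by
    rw [seidelCompl_adj_of_ne _ (by simp) (by simp) (by simpa)]
    simp
  rcases x with _ | w
  · exact hG.not_isUniversal hV u fun t ht => (adj_none t ht.symm).1 (hx (by simp))
  rcases eq_or_ne w u with rfl | hwu
  · refine hG.not_isUniversal hV w fun t ht => ?_
    simpa [seidelCompl_adj_left_self] using hx (Option.some_injective _ |>.ne ht)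
  have huw : G.Adj u w := (adj_none w hwu).1 (hx (by simp)).symm
  obtain ⟨t, htu, htw⟩ := exists_ne_ne_of_three_le_card hV u w
  refine hG.not_isModule (c := t) (Set.mem_insert u {w}) (Set.mem_insert_of_mem u rfl) hwu.symm
    (by simp [htu, htw]) (isModule_pair fun s hsu hsw => ?_)
  have := hx (Option.some_injective _ |>.ne hsw.symm)
  rw [seidelCompl_adj_of_ne _ (by simpa using hsw.symm) (by simpa) (by simpa)] at this
  simpa [huw] using this.symm

end Prime

theorem iso_iff_seidelEquiv_addUniversal_general {V W : Type u} [Fintype V]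
    (G : SimpleGraph V) (H : SimpleGraph W)
    (hV : 4 ≤ Fintype.card V)
    (hG : IsPrime G) :
    Nonempty (G ≃g H) ↔ SeidelEquiv (addUniversal G) (addUniversal H) := by
  refine ⟨fun ⟨f⟩ => ⟨[], ⟨addUniversalCongr f⟩⟩, fun ⟨l, ⟨e⟩⟩ => ?_⟩
  obtain ⟨z, ⟨f⟩⟩ := exists_iso_foldl_seidelCompl (isUniversal_addUniversal_none G) l
  have f' := f.symm.trans e
  rcases z with _ | u
  · rw [seidelCompl_of_isUniversal (isUniversal_addUniversal_none G)] at f'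
    exact ⟨isoOfAddUniversal f'⟩
  · exact (hG.not_isUniversal_seidelCompl_addUniversal (by omega) u _
      ((isUniversal_addUniversal_none H).map f'.symm)).elim

/-- For prime graphs `G, H` on at least 4 vertices, `G ≅ H` iff the graphs obtained by
adding a universal vertex to each are Seidel complement equivalent. -/
theorem iso_iff_seidelEquiv_addUniversal {V W : Type u} [Fintype V] [Fintype W]
    (G : SimpleGraph V) (H : SimpleGraph W)
    (hV : 4 ≤ Fintype.card V) (hW : 4 ≤ Fintype.card W)
    (hG : IsPrime G) (hH : IsPrime H) :
    Nonempty (G ≃g H) ↔ SeidelEquiv (addUniversal G) (addUniversal H) :=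
  iso_iff_seidelEquiv_addUniversal_general G H hV hG
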